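/- Let G be a connected non-complete simple graph that is 2K2-free, C3-free and C4-free, and let S be any minimal vertex separator of G with |S| > 1. Then G − S has exactly one trivial component, i.e., exactly one connected component of G − S consists of a single vertex. -/

import Mathlib

open SimpleGraph

/-- A simple graph is `2K₂`-free: there are no four pairwise distinct vertices `a b c d`
with `ab` and `cd` edges and none of `ac, ad, bc, bd` an edge. -/
def TwoK2Free {V : Type*} (G : SimpleGraph V) : Prop :=
  ¬ ∃ a b c d : V, a ≠ b ∧ a ≠ c ∧ a ≠ d ∧ b ≠ c ∧ b ≠ d ∧ c ≠ d ∧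
    G.Adj a b ∧ G.Adj c d ∧ ¬ G.Adj a c ∧ ¬ G.Adj a d ∧ ¬ G.Adj b c ∧ ¬ G.Adj b d

/-- `S ⊊ V(G)` is a vertex separator: deleting `S` leaves a disconnected graph. -/
def IsSeparator {V : Type*} (G : SimpleGraph V) (S : Set V) : Prop :=
  S ≠ Set.univ ∧ ¬ (G.induce (Sᶜ : Set V)).Connected

/-- A minimal vertex separator: no proper subset is a separator. -/
def IsMinSeparator {V : Type*} (G : SimpleGraph V) (S : Set V) : Prop :=
  IsSeparator G S ∧ ∀ S' : Set V, S' ⊂ S → ¬ IsSeparator G S'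

/-- A connected component is trivial if its support is a single vertex. -/
def IsTrivialComp {α : Type*} {H : SimpleGraph α} (C : H.ConnectedComponent) : Prop :=
  ∃ v, C.supp = {v}

/-- `G` has no induced cycle on `n` vertices. -/
def NoInducedCycle {V : Type*} (n : ℕ) (G : SimpleGraph V) : Prop :=
  ¬ Nonempty (cycleGraph n ↪g G)

/-!
Every vertex of a minimal separator `S` has a neighbour in every component of `G − S`.
Since `G` is `2K₂`-free, at most one component of `G − S` contains an edge, so of the (at least
two) components of `G − S` one is trivial. Two trivial components `{x}` and `{y}` would make
every vertex of `S` a common neighbour of `x` and `y`; but in a `(C₃, C₄)`-free graph two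
distinct vertices have at most one common neighbour, and `|S| > 1`.
-/

section

variable {V : Type*} {G : SimpleGraph V}

theorem NoInducedCycle.not_adj_of_adj_of_adj (h : NoInducedCycle 3 G) {a b c : V}
    (hab : G.Adj a b) (hbc : G.Adj b c) : ¬ G.Adj c a := by
  intro hca
  refine h ⟨⟨⟨![a, b, c], ?_⟩, ?_⟩⟩
  · have := hab.ne; have := hbc.ne; have := hca.ne
    intro i j hij
    fin_cases i <;> fin_cases j <;> simp_all
  · intro i j
    change G.Adj (![a, b, c] i) (![a, b, c] j) ↔ (cycleGraph 3).Adj i j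
    fin_cases i <;> fin_cases j <;>
      simp [cycleGraph_three_eq_top, hab, hab.symm, hbc, hbc.symm, hca, hca.symm]

theorem NoInducedCycle.adj_or_adj_of_adj (h : NoInducedCycle 4 G) {a b c d : V}
    (hab : G.Adj a b) (hbc : G.Adj b c) (hcd : G.Adj c d) (hda : G.Adj d a)
    (hac : a ≠ c) (hbd : b ≠ d) : G.Adj a c ∨ G.Adj b d := by
  by_contra! hdiag
  obtain ⟨hac', hbd'⟩ := hdiag
  refine h ⟨⟨⟨![a, b, c, d], ?_⟩, ?_⟩⟩
  · have := hab.ne; have := hbc.ne; have := hcd.ne; have := hda.ne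
    intro i j hij
    fin_cases i <;> fin_cases j <;> simp_all
  · intro i j
    change G.Adj (![a, b, c, d] i) (![a, b, c, d] j) ↔ (cycleGraph 4).Adj i j
    fin_cases i <;> fin_cases j <;>
      simp [cycleGraph_adj, hab, hab.symm, hbc, hbc.symm, hcd, hcd.symm, hda, hda.symm,
        hac', hbd', G.adj_comm c a, G.adj_comm d b] <;> decide

/-- Two common neighbours `s ≠ t` of `x ≠ y` span a triangle if `s ~ t` or `x ~ y`,
and the induced cycle `x s y t` otherwise. -/
theorem commonNeighbors_subsingleton (hc3 : NoInducedCycle 3 G) (hc4 : NoInducedCycle 4 G)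
    {x y : V} (hxy : x ≠ y) : (G.commonNeighbors x y).Subsingleton := by
  rintro s ⟨hxs, hys⟩ t ⟨hxt, hyt⟩
  by_contra hst
  have hxy' : ¬ G.Adj x y := hc3.not_adj_of_adj_of_adj hys hxs.symm
  have hst' : ¬ G.Adj s t := hc3.not_adj_of_adj_of_adj hxt.symm hxs
  exact (hc4.adj_or_adj_of_adj hxs hys.symm hyt hxt.symm hxy hst).elim hxy' hst'

namespace SimpleGraph.ConnectedComponent

variable {α : Type*} {H : SimpleGraph α}

theorem ne_of_mem_supp_of_ne {C D : H.ConnectedComponent} (hCD : C ≠ D) {a b : α}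
    (ha : a ∈ C.supp) (hb : b ∈ D.supp) : a ≠ b := by
  rintro rfl
  exact hCD (eq_of_common_vertex ha hb)

theorem not_adj_of_mem_supp_of_ne {C D : H.ConnectedComponent} (hCD : C ≠ D) {a b : α}
    (ha : a ∈ C.supp) (hb : b ∈ D.supp) : ¬ H.Adj a b := fun hab =>
  hCD (eq_of_common_vertex (C.mem_supp_of_adj_mem_supp ha hab) hb)

theorem exists_adj_of_not_isTrivialComp {C : H.ConnectedComponent} (hC : ¬ IsTrivialComp C) :
    ∃ a ∈ C.supp, ∃ b ∈ C.supp, H.Adj a b := by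
  have : Nontrivial C.supp :=
    (C.nonempty_supp.exists_eq_singleton_or_nontrivial.resolve_left hC).coe_sort
  obtain ⟨u, huv⟩ := C.connected_toSimpleGraph.preconnected.exists_adj_of_nontrivial
    ⟨C.out, C.out_eq⟩
  exact ⟨_, C.out_eq, u, u.2, huv⟩

end SimpleGraph.ConnectedComponent

open SimpleGraph.ConnectedComponent in
theorem TwoK2Free.isTrivialComp_or_isTrivialComp (h : TwoK2Free G) {s : Set V}
    {C D : (G.induce s).ConnectedComponent} (hCD : C ≠ D) :
    IsTrivialComp C ∨ IsTrivialComp D := by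
  by_contra! hnt
  obtain ⟨a, ha, b, hb, hab⟩ := exists_adj_of_not_isTrivialComp hnt.1
  obtain ⟨c, hc, d, hd, hcd⟩ := exists_adj_of_not_isTrivialComp hnt.2
  have hne {x y : s} (hx : x ∈ C.supp) (hy : y ∈ D.supp) : (x : V) ≠ y :=
    Subtype.coe_ne_coe.2 (ne_of_mem_supp_of_ne hCD hx hy)
  exact h ⟨a, b, c, d, G.ne_of_adj hab, hne ha hc, hne ha hd, hne hb hc, hne hb hd,
    G.ne_of_adj hcd, hab, hcd,
    not_adj_of_mem_supp_of_ne hCD ha hc, not_adj_of_mem_supp_of_ne hCD ha hd,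
    not_adj_of_mem_supp_of_ne hCD hb hc, not_adj_of_mem_supp_of_ne hCD hb hd⟩

theorem IsSeparator.exists_ne_connectedComponent {S : Set V} (hS : IsSeparator G S) :
    ∃ C D : (G.induce Sᶜ).ConnectedComponent, C ≠ D := by
  obtain ⟨z, hz⟩ := Set.ne_univ_iff_exists_notMem S |>.1 hS.1
  have : ¬ (G.induce Sᶜ).Preconnected := fun hpre =>
    hS.2 ((connected_iff _).2 ⟨hpre, ⟨⟨z, hz⟩⟩⟩)
  obtain ⟨u, v, huv⟩ : ∃ u v, ¬ (G.induce Sᶜ).Reachable u v := by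
    simpa [Preconnected] using this
  exact ⟨_, _, fun h => huv (ConnectedComponent.exact h)⟩

/-- `G − (S \ {s})` is connected, and a path in it from the component `C` to `s` can only leave
`C` through `s`. -/
theorem IsMinSeparator.exists_adj_mem_supp {S : Set V} (hS : IsMinSeparator G S) {s : V}
    (hs : s ∈ S) (C : (G.induce Sᶜ).ConnectedComponent) :
    ∃ w ∈ C.supp, G.Adj s w := by
  set T : Set V := S \ {s}
  have hT : (G.induce Tᶜ).Connected := by
    have hsT : s ∉ T := fun h => h.2 rfl
    by_contra hT
    exact hS.2 T (Set.sdiff_singleton_ssubset.2 hs) ⟨fun h => hsT (h ▸ Set.mem_univ s), hT⟩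
  obtain ⟨u, hu⟩ := C.nonempty_supp
  obtain ⟨p⟩ := hT.preconnected ⟨u, fun h => u.2 h.1⟩ ⟨s, fun h => h.2 rfl⟩
  let inC : Set ↥Tᶜ := {v | ∃ h : (v : V) ∈ Sᶜ, ⟨v, h⟩ ∈ C.supp}
  obtain ⟨d, -, ⟨hfst, hfstC⟩, hsnd⟩ :=
    p.exists_boundary_dart inC ⟨u.2, hu⟩ (fun ⟨h, _⟩ => h hs)
  have hds : (d.snd : V) = s := by
    by_contra hne
    have hsndS : (d.snd : V) ∈ Sᶜ := fun h => d.snd.2 ⟨h, hne⟩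
    exact hsnd ⟨hsndS, C.mem_supp_of_adj_mem_supp hfstC (d.adj : G.Adj d.fst d.snd)⟩
  exact ⟨⟨d.fst, hfst⟩, hfstC, hds ▸ d.adj.symm⟩

theorem IsMinSeparator.adj_of_supp_eq_singleton {S : Set V} (hS : IsMinSeparator G S) {s : V}
    (hs : s ∈ S) {C : (G.induce Sᶜ).ConnectedComponent} {x : ↥Sᶜ} (hC : C.supp = {x}) :
    G.Adj s x := by
  obtain ⟨w, hw, hsw⟩ := hS.exists_adj_mem_supp hs C
  obtain rfl : w = x := by rwa [hC] at hw
  exact hsw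

end

theorem exactlyOne_trivial_component_general {V : Type*} (G : SimpleGraph V)
    (h2k2 : TwoK2Free G) (hc3 : NoInducedCycle 3 G) (hc4 : NoInducedCycle 4 G)
    (S : Set V) (hS : IsMinSeparator G S) (hcard : 1 < S.ncard) :
    ∃! C : (G.induce (Sᶜ : Set V)).ConnectedComponent, IsTrivialComp C := by
  obtain ⟨C, D, hCD⟩ := hS.1.exists_ne_connectedComponent
  refine existsUnique_of_exists_of_unique ?_ ?_
  · exact (h2k2.isTrivialComp_or_isTrivialComp hCD).elim (⟨C, ·⟩) (⟨D, ·⟩)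
  rintro C₁ C₂ ⟨x, hx⟩ ⟨y, hy⟩
  by_contra hne
  have hxy : (x : V) ≠ y := Subtype.coe_ne_coe.2 <| ConnectedComponent.ne_of_mem_supp_of_ne hne
    (hx ▸ Set.mem_singleton x) (hy ▸ Set.mem_singleton y)
  have hSxy : S ⊆ G.commonNeighbors x y := fun s hs =>
    ⟨(hS.adj_of_supp_eq_singleton hs hx).symm, (hS.adj_of_supp_eq_singleton hs hy).symm⟩
  have hsub := (commonNeighbors_subsingleton hc3 hc4 hxy).anti hSxy
  exact hcard.not_ge ((Set.ncard_le_one hsub.finite).2 hsub)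

/-- In a connected non-complete `(2K₂, C₃, C₄)`-free graph, if a minimal vertex separator
`S` has more than one vertex, then `G − S` has exactly one trivial component. -/
theorem exactlyOne_trivial_component {V : Type*} [Fintype V] (G : SimpleGraph V)
    (hconn : G.Connected) (hnc : ∃ u v : V, u ≠ v ∧ ¬ G.Adj u v)
    (h2k2 : TwoK2Free G) (hc3 : NoInducedCycle 3 G) (hc4 : NoInducedCycle 4 G)
    (S : Set V) (hS : IsMinSeparator G S) (hcard : 1 < S.ncard) :
    ∃! C : (G.induce (Sᶜ : Set V)).ConnectedComponent, IsTrivialComp C :=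
  exactlyOne_trivial_component_general G h2k2 hc3 hc4 S hS hcard
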